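/- The whole tone scale {0,2,4,6,8,10} is a maximal non-chromatic scale with exactly 2 distinct translates, and the augmented scale {0,1,4,5,8,9} is a maximal non-chromatic scale with exactly 4 distinct translates; consequently there are exactly 6 maximal non-chromatic scales with 6 elements. -/
import Mathlib


/-- A scale is a finite subset of the twelve pitch classes `ZMod 12`.
It is non-chromatic if it contains no three consecutive pitch classes. -/
def NonChromatic (S : Finset (ZMod 12)) : Prop :=
  ∀ t : ZMod 12, ¬(t ∈ S ∧ t + 1 ∈ S ∧ t + 2 ∈ S)

instance : DecidablePred NonChromatic := fun S => by
  unfold NonChromatic; infer_instance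

/-- A non-chromatic scale is maximal if every scale strictly containing it
fails to be non-chromatic. -/
def MaximalNC (S : Finset (ZMod 12)) : Prop :=
  NonChromatic S ∧ ∀ T : Finset (ZMod 12), S ⊂ T → ¬ NonChromatic T

instance : DecidablePred MaximalNC := fun S => by
  unfold MaximalNC; infer_instance

/-- The translateScale `t + S` of a scale. -/
lemma nc_anti {S T : Finset (ZMod 12)} (h : S ⊆ T) (hT : NonChromatic T) :
    NonChromatic S := fun t ht => hT t ⟨h ht.1, h ht.2.1, h ht.2.2⟩

lemma zmod_ne (x : ZMod 12) : x + 1 ≠ x ∧ x + 2 ≠ x ∧ x + 1 ≠ x + 2 := by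
  revert x; decide

lemma maximalNC_iff (S : Finset (ZMod 12)) :
    MaximalNC S ↔ NonChromatic S ∧ ∀ x : ZMod 12, x ∉ S →
      ((x + 1 ∈ S ∧ x + 2 ∈ S) ∨ (x - 1 ∈ S ∧ x + 1 ∈ S) ∨ (x - 2 ∈ S ∧ x - 1 ∈ S)) := by
  constructor
  · rintro ⟨h1, h2⟩
    refine ⟨h1, fun x hx => ?_⟩
    have := h2 _ (Finset.ssubset_insert hx)
    simp only [NonChromatic, not_forall, not_not] at this
    obtain ⟨t, ht0, ht1, ht2⟩ := this
    simp only [Finset.mem_insert] at ht0 ht1 ht2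
    rcases ht0 with rfl | ht0
    · rcases ht1 with h | ht1
      · exact absurd h (zmod_ne t).1
      rcases ht2 with h | ht2
      · exact absurd h (zmod_ne t).2.1
      exact Or.inl ⟨ht1, ht2⟩
    rcases ht1 with rfl | ht1
    · rcases ht2 with h | ht2
      · exact absurd h.symm (zmod_ne t).2.2
      refine Or.inr (Or.inl ⟨?_, ?_⟩)
      · simpa using ht0
      · simpa [add_assoc, one_add_one_eq_two] using ht2
    rcases ht2 with rfl | ht2
    · refine Or.inr (Or.inr ⟨?_, ?_⟩)
      · simpa using ht0
      · have e : t + 2 - 1 = t + 1 := by ring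
        rw [e]; exact ht1
    · exact absurd ⟨ht0, ht1, ht2⟩ (h1 t)
  · rintro ⟨h1, h2⟩
    refine ⟨h1, fun T hT hTnc => ?_⟩
    obtain ⟨x, hxT, hxS⟩ := Finset.exists_of_ssubset hT
    have hsub : ∀ y ∈ S, y ∈ T := fun y hy => hT.1 hy
    rcases h2 x hxS with ⟨a, b⟩ | ⟨a, b⟩ | ⟨a, b⟩
    · exact hTnc x ⟨hxT, hsub _ a, hsub _ b⟩
    · refine hTnc (x - 1) ⟨hsub _ a, ?_, ?_⟩
      · simpa using hxT
      · have e : x - 1 + 2 = x + 1 := by ring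
        rw [e]; exact hsub _ b
    · refine hTnc (x - 2) ⟨hsub _ a, ?_, ?_⟩
      · have : x - 2 + 1 = x - 1 := by ring
        rw [this]; exact hsub _ b
      · have : x - 2 + 2 = x := by ring
        rw [this]; exact hxT

def translateScale (t : ZMod 12) (S : Finset (ZMod 12)) : Finset (ZMod 12) :=
  S.image (fun x => t + x)

set_option maxRecDepth 100000 in
set_option maxHeartbeats 4000000 in
theorem hexatonic_maximal_scales :
    MaximalNC ({0,2,4,6,8,10} : Finset (ZMod 12)) ∧
    (Finset.univ.image
      (fun t : ZMod 12 => translateScale t ({0,2,4,6,8,10} : Finset (ZMod 12)))).card = 2 ∧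
    MaximalNC ({0,1,4,5,8,9} : Finset (ZMod 12)) ∧
    (Finset.univ.image
      (fun t : ZMod 12 => translateScale t ({0,1,4,5,8,9} : Finset (ZMod 12)))).card = 4 ∧
    (Finset.univ.filter (fun S : Finset (ZMod 12) => MaximalNC S ∧ S.card = 6)).card = 6 := by
  refine ⟨?_, ?_, ?_, ?_, ?_⟩
  · rw [maximalNC_iff]; decide
  · decide
  · rw [maximalNC_iff]; decide
  · decide
  · simp only [maximalNC_iff]
    decide
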